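/- arXiv:2603.13807 — 2 statements merged into one kernel-verified Lean document; each statement's English description precedes it below -/
import Mathlib

section
/- Let θ* be the c.i.i.d. signal structure with single-expert joint law Pr[ω=0, S_i=0] = 3/8, Pr[ω=0, S_i=1] = 3/8, Pr[ω=1, S_i=0] = 0, Pr[ω=1, S_i=1] = 1/4, and let λ* = 5/2, so that under rep(θ*, ψ_{λ*}) each expert independently reports 1 with probability q_0 = 1/(2+2e^5) + 1/(2+2e) when ω = 0 and with probability q_1 = 1/(1+e) when ω = 1. Then for every n > 2, majority voting on the bounded-rational reports beats the best aggregation of fully rational reports: U(f^maj, rep(θ*, ψ_{λ*})) > max over aggregators f of U(f, rep(θ*, ψ_∞)) = 1/2. -/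
open Real Finset

/-- Quantal response function `ψ_λ(p) = 1/(1 + exp(2λ(1−2p)))`. -/
noncomputable def psi (lam p : ℝ) : ℝ := 1 / (1 + Real.exp (2 * lam * (1 - 2 * p)))

/-- A c.i.i.d. signal structure with finite signal set `Fin k`: prior `prior = Pr[ω = 1]`
and conditional signal laws `nu0 s = Pr[S_i = s | ω = 0]`, `nu1 s = Pr[S_i = s | ω = 1]`,
common to all experts, with signals i.i.d. conditionally on `ω`. -/
structure SignalStructure where
  k : ℕ
  prior : ℝ
  nu0 : Fin k → ℝ
  nu1 : Fin k → ℝ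
  prior_nonneg : 0 ≤ prior
  prior_le_one : prior ≤ 1
  nu0_nonneg : ∀ s, 0 ≤ nu0 s
  nu1_nonneg : ∀ s, 0 ≤ nu1 s
  nu0_sum : ∑ s, nu0 s = 1
  nu1_sum : ∑ s, nu1 s = 1

/-- Posterior `Pr_θ[ω = 1 | S_i = s]` (set to `0` on null signals). -/
noncomputable def posterior (θ : SignalStructure) (s : Fin θ.k) : ℝ :=
  if θ.prior * θ.nu1 s + (1 - θ.prior) * θ.nu0 s = 0 then 0
  else θ.prior * θ.nu1 s / (θ.prior * θ.nu1 s + (1 - θ.prior) * θ.nu0 s)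

/-- `Pr[X_i = 1 | ω = w]` when each expert reports `1` with probability
`ψ(Pr_θ[ω = 1 | S_i = s])` given its signal `s`. -/
noncomputable def reportProb (θ : SignalStructure) (ψ : ℝ → ℝ) (w : Bool) : ℝ :=
  ∑ s, (if w then θ.nu1 s else θ.nu0 s) * ψ (posterior θ s)

/-- The joint law of `(ω, X_1, …, X_n)` in which `Pr[ω = 1] = μ` and, conditionally
on `ω`, the binary reports `X_i` are i.i.d. with `Pr[X_i = 1 | ω = 1] = q1` and
`Pr[X_i = 1 | ω = 0] = q0`. -/
noncomputable def repOf (n : ℕ) (μ q0 q1 : ℝ) : Bool → (Fin n → Bool) → ℝ :=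
  fun w x =>
    (if w then μ else 1 - μ) *
      ∏ i, (if x i then (if w then q1 else q0) else 1 - (if w then q1 else q0))

/-- The report structure `rep(θ, ψ)`: the joint law of `(ω, X_1, …, X_n)` induced
by the signal structure `θ` and the response function `ψ`. -/
noncomputable def rep (n : ℕ) (θ : SignalStructure) (ψ : ℝ → ℝ) :
    Bool → (Fin n → Bool) → ℝ :=
  repOf n θ.prior (reportProb θ ψ false) (reportProb θ ψ true)

/-- The set `Θ̂^ciid_λ` of report structures induced by all c.i.i.d. signal structures. -/
noncomputable def repSet (n : ℕ) (lam : ℝ) : Set (Bool → (Fin n → Bool) → ℝ) :=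
  {r | ∃ θ : SignalStructure, rep n θ (psi lam) = r}

/-- `Pr[ω = w, X = x]` where `X = Σ_i X_i` counts the experts reporting `1`. -/
noncomputable def jointProb (n : ℕ) (r : Bool → (Fin n → Bool) → ℝ) (w : Bool) (x : ℕ) : ℝ :=
  ∑ v : Fin n → Bool,
    if (Finset.univ.filter (fun i => v i = true)).card = x then r w v else 0

/-- Utility `U(f, θ̂) = Σ_x Pr[X=x]·(2Pr[ω=1|X=x]−1)·(2f(x)−1)
             = Σ_x (2f(x)−1)·(Pr[ω=1,X=x] − Pr[ω=0,X=x])`. -/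
noncomputable def U (n : ℕ) (f : ℕ → ℝ) (r : Bool → (Fin n → Bool) → ℝ) : ℝ :=
  ∑ x ∈ Finset.range (n + 1),
    (2 * f x - 1) * (jointProb n r true x - jointProb n r false x)

/-- The omniscient aggregator `opt_θ̂`: sends `x` to `1`, `1/2`, `0` according as
`Pr[ω=1 | X=x]` is `>`, `=`, `<` `1/2`. -/
noncomputable def optAgg (n : ℕ) (r : Bool → (Fin n → Bool) → ℝ) : ℕ → ℝ := fun x =>
  if jointProb n r false x < jointProb n r true x then 1
  else if jointProb n r true x = jointProb n r false x then 1 / 2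
  else 0

/-- Regret `R(f, θ̂) = U(opt_θ̂, θ̂) − U(f, θ̂)`. -/
noncomputable def regret (n : ℕ) (f : ℕ → ℝ) (r : Bool → (Fin n → Bool) → ℝ) : ℝ :=
  U n (optAgg n r) r - U n f r

/-- An aggregator `f : {0,…,n} → [0,1]`. -/
def IsAggregator (f : ℕ → ℝ) : Prop := ∀ x, 0 ≤ f x ∧ f x ≤ 1

/-- Majority voting `f^maj`. -/
noncomputable def fmaj (n : ℕ) : ℕ → ℝ := fun x =>
  if 2 * x < n then 0 else if 2 * x = n then 1 / 2 else 1

/-- Worst-case regret of aggregator `f` over all c.i.i.d.-induced report structures. -/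
noncomputable def worstRegret (n : ℕ) (lam : ℝ) (f : ℕ → ℝ) : ℝ :=
  sSup {t : ℝ | ∃ r ∈ repSet n lam, t = regret n f r}

/-- The fully rational (perfectly rational, `λ → ∞`) response function. -/
noncomputable def psiInf (p : ℝ) : ℝ :=
  if 1 / 2 < p then 1 else if p = 1 / 2 then 1 / 2 else 0

/-- The signal structure `θ*` with single-expert joint law
`Pr[ω=0, S_i=0] = 3/8`, `Pr[ω=0, S_i=1] = 3/8`, `Pr[ω=1, S_i=0] = 0`, `Pr[ω=1, S_i=1] = 1/4`
(i.e. prior `μ = 1/4`, `ν_0 = (1/2, 1/2)`, `ν_1 = (0, 1)`). -/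
noncomputable def thetaStar : SignalStructure where
  k := 2
  prior := 1 / 4
  nu0 := ![1 / 2, 1 / 2]
  nu1 := ![0, 1]
  prior_nonneg := by norm_num
  prior_le_one := by norm_num
  nu0_nonneg := by intro s; fin_cases s <;> norm_num
  nu1_nonneg := by intro s; fin_cases s <;> norm_num
  nu0_sum := by norm_num [Fin.sum_univ_two]
  nu1_sum := by norm_num [Fin.sum_univ_two]

/-!
A fully rational expert under `θ*` has posterior `0` or `2/5`, never above `1/2`, so every report
is `0` and the best an aggregator can do is to answer `0`, for utility `1/2`. Under `ψ_{5/2}` the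
reports are i.i.d. Bernoulli(`q_ω`) given `ω`, and with prior `1/4` majority voting has utility
above `1/2` exactly when it answers `1` more than three times as often under `ω = 1` as under
`ω = 0`. For odd `n = 2k + 1` this holds term by term: the likelihood ratio of `x ≥ k + 1` ones is
`(q₁/q₀)^x ((1-q₁)/(1-q₀))^(n-x) ≥ (q₁/q₀)² (1-q₁)/(1-q₀) > 3`. For even `n`, majority voting
with fair tie-breaking answers `1` exactly as often as majority voting among `n - 1` experts.
-/

noncomputable def binomPMF (n : ℕ) (q : ℝ) (x : ℕ) : ℝ :=
  n.choose x * q ^ x * (1 - q) ^ (n - x)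

lemma sum_binomPMF (n : ℕ) (q : ℝ) : ∑ x ∈ range (n + 1), binomPMF n q x = 1 :=
  calc _ = (q + (1 - q)) ^ n := by
        rw [add_pow]; exact sum_congr rfl fun x _ => by rw [binomPMF]; ring
    _ = 1 := by rw [add_sub_cancel, one_pow]

lemma binomPMF_of_lt {n x : ℕ} (q : ℝ) (h : n < x) : binomPMF n q x = 0 := by
  simp [binomPMF, Nat.choose_eq_zero_of_lt h]

lemma binomPMF_succ_zero (n : ℕ) (q : ℝ) : binomPMF (n + 1) q 0 = (1 - q) * binomPMF n q 0 := by
  simp only [binomPMF, Nat.choose_zero_right, pow_zero, Nat.sub_zero, pow_succ]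
  ring

lemma binomPMF_succ_succ (n : ℕ) (q : ℝ) (y : ℕ) :
    binomPMF (n + 1) q (y + 1) = q * binomPMF n q y + (1 - q) * binomPMF n q (y + 1) := by
  simp only [binomPMF, Nat.choose_succ_succ, Nat.cast_add, Nat.add_sub_add_right]
  rcases lt_or_ge y n with hy | hy
  · obtain ⟨k, rfl⟩ := Nat.exists_eq_add_of_lt hy
    rw [show y + k + 1 - y = k + 1 by omega, show y + k + 1 - (y + 1) = k by omega]
    ring
  · rw [Nat.choose_eq_zero_of_lt (by omega : n < y + 1)]
    ring

noncomputable def binomExpect (n : ℕ) (q : ℝ) (g : ℕ → ℝ) : ℝ :=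
  ∑ x ∈ range (n + 1), g x * binomPMF n q x

lemma binomExpect_two_mul_sub_one (n : ℕ) (q : ℝ) (g : ℕ → ℝ) :
    binomExpect n q (fun x => 2 * g x - 1) = 2 * binomExpect n q g - 1 :=
  calc binomExpect n q (fun x => 2 * g x - 1)
      = 2 * binomExpect n q g - ∑ x ∈ range (n + 1), binomPMF n q x := by
        rw [binomExpect, binomExpect, mul_sum, ← sum_sub_distrib]
        exact sum_congr rfl fun x _ => by ring
    _ = 2 * binomExpect n q g - 1 := by rw [sum_binomPMF]

lemma binomExpect_zero_right (n : ℕ) (g : ℕ → ℝ) : binomExpect n 0 g = g 0 := by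
  rw [binomExpect, sum_eq_single 0 (fun x _ hx => by simp [binomPMF, hx]) (by simp)]
  simp [binomPMF]

-- Condition on the outcome of the last of `n + 1` trials.
lemma binomExpect_succ (n : ℕ) (q : ℝ) (g : ℕ → ℝ) :
    binomExpect (n + 1) q g = binomExpect n q (fun y => (1 - q) * g y + q * g (y + 1)) := by
  have hshift : ∑ y ∈ range (n + 1), g y * binomPMF n q y
      = ∑ y ∈ range (n + 1), g (y + 1) * binomPMF n q (y + 1) + g 0 * binomPMF n q 0 := by
    rw [← sum_range_succ' (fun y => g y * binomPMF n q y), sum_range_succ _ (n + 1),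
      binomPMF_of_lt q (Nat.lt_succ_self n), mul_zero, add_zero]
  have hlast : ∀ y, g (y + 1) * binomPMF (n + 1) q (y + 1)
      = q * (g (y + 1) * binomPMF n q y) + (1 - q) * (g (y + 1) * binomPMF n q (y + 1)) := by
    intro y
    rw [binomPMF_succ_succ]
    ring
  have hfirst : ∀ y, ((1 - q) * g y + q * g (y + 1)) * binomPMF n q y
      = (1 - q) * (g y * binomPMF n q y) + q * (g (y + 1) * binomPMF n q y) := fun y => by ring
  simp only [binomExpect]
  rw [sum_range_succ', binomPMF_succ_zero, sum_congr rfl fun y _ => hlast y,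
    sum_congr rfl fun y _ => hfirst y, sum_add_distrib, sum_add_distrib]
  simp only [← mul_sum]
  rw [hshift]
  ring

lemma card_boolFun_card_eq_choose (n x : ℕ) :
    #{v : Fin n → Bool | #{i | v i = true} = x} = n.choose x := by
  rw [show n.choose x = #(powersetCard x (univ : Finset (Fin n))) by simp]
  refine card_bij' (fun v _ => ({i | v i = true} : Finset (Fin n))) (fun A _ i => decide (i ∈ A))
    ?_ ?_ ?_ ?_
  · intro v hv
    simpa [mem_powersetCard] using hv
  · intro A hA
    simpa [mem_powersetCard] using hA
  · intro v _
    simp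
  · intro A _
    ext i
    simp

lemma sum_prod_bernoulli_of_card_eq (n x : ℕ) (p : ℝ) :
    (∑ v : Fin n → Bool, if #{i | v i = true} = x then ∏ i, (if v i then p else 1 - p) else 0)
      = binomPMF n p x := by
  have hprod : ∀ v ∈ ({v | #{i | v i = true} = x} : Finset (Fin n → Bool)),
      ∏ i, (if v i then p else 1 - p) = p ^ x * (1 - p) ^ (n - x) := by
    intro v hv
    rw [mem_filter] at hv
    rw [prod_ite, prod_const, prod_const, hv.2, filter_not,
      card_sdiff_of_subset (filter_subset _ _), card_univ, Fintype.card_fin, hv.2]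
  rw [← sum_filter, sum_congr rfl hprod, sum_const, card_boolFun_card_eq_choose, nsmul_eq_mul,
    binomPMF, mul_assoc]

lemma jointProb_repOf (n : ℕ) (μ q₀ q₁ : ℝ) (w : Bool) (x : ℕ) :
    jointProb n (repOf n μ q₀ q₁) w x
      = (if w then μ else 1 - μ) * binomPMF n (if w then q₁ else q₀) x := by
  rw [← sum_prod_bernoulli_of_card_eq, mul_sum]
  refine sum_congr rfl fun v _ => ?_
  rw [mul_ite, mul_zero]
  rfl

lemma U_repOf (n : ℕ) (f : ℕ → ℝ) (μ q₀ q₁ : ℝ) :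
    U n f (repOf n μ q₀ q₁)
      = μ * (2 * binomExpect n q₁ f - 1) - (1 - μ) * (2 * binomExpect n q₀ f - 1) := by
  rw [← binomExpect_two_mul_sub_one, ← binomExpect_two_mul_sub_one, binomExpect, binomExpect,
    mul_sum, mul_sum, ← sum_sub_distrib, U]
  refine sum_congr rfl fun x _ => ?_
  rw [jointProb_repOf, jointProb_repOf]
  simp only [if_true, Bool.false_eq_true, if_false]
  ring

lemma fmaj_odd (k x : ℕ) : fmaj (2 * k + 1) x = if k < x then 1 else 0 := by
  unfold fmaj
  split_ifs <;> first | rfl | omega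

lemma binomExpect_fmaj_even (k : ℕ) (q : ℝ) :
    binomExpect (2 * k + 2) q (fmaj (2 * k + 2))
      = binomExpect (2 * k + 1) q (fmaj (2 * k + 1)) := by
  set b := binomPMF (2 * k + 1) q
  have hpoint : ∀ y, ((1 - q) * fmaj (2 * k + 2) y + q * fmaj (2 * k + 2) (y + 1)) * b y
      = fmaj (2 * k + 1) y * b y + ((if y = k then q / 2 * b y else 0)
        - if y = k + 1 then (1 - q) / 2 * b y else 0) := by
    intro y
    simp only [fmaj]
    split_ifs <;> first | omega | ring
  -- Ties arise from `k` ones (extra vote `1`) and `k + 1` ones (extra vote `0`) with equal weight.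
  have htie : q / 2 * b k = (1 - q) / 2 * b (k + 1) := by
    simp only [b, binomPMF, Nat.choose_symm_half, show 2 * k + 1 - k = k + 1 by omega,
      show 2 * k + 1 - (k + 1) = k by omega]
    ring
  rw [show 2 * k + 2 = 2 * k + 1 + 1 by ring, binomExpect_succ, binomExpect, binomExpect,
    sum_congr rfl fun y _ => hpoint y, sum_add_distrib, sum_sub_distrib, sum_ite_eq',
    sum_ite_eq', if_pos (mem_range.2 (by omega)), if_pos (mem_range.2 (by omega)), htie,
    sub_self, add_zero]

lemma sq_mul_le_pow_mul_pow {ρ σ : ℝ} (hρ : 1 ≤ ρ) (hσ₀ : 0 ≤ σ) (hσ₁ : σ ≤ 1) (hρσ : 1 ≤ ρ * σ)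
    {k x y : ℕ} (hk : k ≠ 0) (hx : k + 1 ≤ x) (hy : y ≤ k) : ρ ^ 2 * σ ≤ ρ ^ x * σ ^ y :=
  calc ρ ^ 2 * σ = ρ * (ρ * σ) := by ring
    _ ≤ ρ * (ρ * σ) ^ k := by gcongr; exact le_self_pow₀ hρσ hk
    _ = ρ ^ (k + 1) * σ ^ k := by ring
    _ ≤ ρ ^ x * σ ^ y := mul_le_mul (pow_le_pow_right₀ hρ hx) (pow_le_pow_of_le_one hσ₀ hσ₁ hy)
      (pow_nonneg hσ₀ k) (pow_nonneg (zero_le_one.trans hρ) x)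

section LikelihoodRatio

variable {c q₀ q₁ : ℝ} (hq₀ : 0 < q₀) (hq₀₁ : q₀ ≤ q₁) (hq₁ : q₁ < 1)
  (hvar : q₀ * (1 - q₀) ≤ q₁ * (1 - q₁)) (hc : c * (q₀ ^ 2 * (1 - q₀)) < q₁ ^ 2 * (1 - q₁))
include hq₀ hq₀₁ hq₁ hvar hc

lemma mul_pow_mul_pow_lt {k x y : ℕ} (hk : k ≠ 0) (hx : k + 1 ≤ x) (hy : y ≤ k) :
    c * (q₀ ^ x * (1 - q₀) ^ y) < q₁ ^ x * (1 - q₁) ^ y := by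
  have hp₀ : 0 < 1 - q₀ := by linarith
  set ρ := q₁ / q₀
  set σ := (1 - q₁) / (1 - q₀)
  have hρσ : 1 ≤ ρ * σ := by
    rw [div_mul_div_comm, one_le_div (by positivity)]
    exact hvar
  have hc' : c < ρ ^ 2 * σ := by
    rw [div_pow, div_mul_div_comm, lt_div_iff₀ (by positivity)]
    exact hc
  have hratio : ρ ^ 2 * σ ≤ ρ ^ x * σ ^ y :=
    sq_mul_le_pow_mul_pow ((one_le_div hq₀).2 hq₀₁) (div_nonneg (by linarith) hp₀.le)
      ((div_le_one hp₀).2 (by linarith)) hρσ hk hx hy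
  calc c * (q₀ ^ x * (1 - q₀) ^ y) < ρ ^ 2 * σ * (q₀ ^ x * (1 - q₀) ^ y) := by
        gcongr
    _ ≤ ρ ^ x * σ ^ y * (q₀ ^ x * (1 - q₀) ^ y) := by gcongr
    _ = q₁ ^ x * (1 - q₁) ^ y := by
        simp only [ρ, σ, div_pow]
        field_simp

lemma mul_binomExpect_fmaj_odd_lt {k : ℕ} (hk : k ≠ 0) :
    c * binomExpect (2 * k + 1) q₀ (fmaj (2 * k + 1))
      < binomExpect (2 * k + 1) q₁ (fmaj (2 * k + 1)) := by
  have hterm : ∀ x ∈ range (2 * k + 2), k < x →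
      c * binomPMF (2 * k + 1) q₀ x < binomPMF (2 * k + 1) q₁ x := by
    intro x hx hkx
    have hchoose : (0 : ℝ) < (2 * k + 1).choose x := by
      exact_mod_cast Nat.choose_pos (by simp at hx; omega)
    have := mul_pow_mul_pow_lt hq₀ hq₀₁ hq₁ hvar hc hk hkx (y := 2 * k + 1 - x) (by omega)
    simp only [binomPMF, mul_assoc]
    nlinarith
  rw [binomExpect, binomExpect, mul_sum]
  refine sum_lt_sum (fun x hx => ?_) ⟨2 * k + 1, by simp, ?_⟩
  · rw [fmaj_odd]
    split_ifs with hkx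
    · simpa using (hterm x hx hkx).le
    · simp
  · rw [fmaj_odd, if_pos (by omega)]
    simpa using hterm _ (by simp) (by omega)

lemma mul_binomExpect_fmaj_lt {n : ℕ} (hn : 2 < n) :
    c * binomExpect n q₀ (fmaj n) < binomExpect n q₁ (fmaj n) := by
  obtain ⟨k, rfl | rfl⟩ := Nat.even_or_odd' n
  · obtain ⟨j, rfl⟩ : ∃ j, k = j + 1 := ⟨k - 1, by omega⟩
    rw [show 2 * (j + 1) = 2 * j + 2 by ring, binomExpect_fmaj_even, binomExpect_fmaj_even]
    exact mul_binomExpect_fmaj_odd_lt hq₀ hq₀₁ hq₁ hvar hc (by omega)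
  · exact mul_binomExpect_fmaj_odd_lt hq₀ hq₀₁ hq₁ hvar hc (by omega)

end LikelihoodRatio

lemma reportProb_thetaStar (ψ : ℝ → ℝ) (w : Bool) :
    reportProb thetaStar ψ w = if w then ψ (2 / 5) else (ψ 0 + ψ (2 / 5)) / 2 := by
  rw [reportProb]
  erw [Fin.sum_univ_two]
  simp only [thetaStar, posterior, Matrix.cons_val_zero, Matrix.cons_val_one]
  cases w
  · norm_num
    ring
  · norm_num

lemma rep_thetaStar (n : ℕ) (ψ : ℝ → ℝ) :
    rep n thetaStar ψ = repOf n (1 / 4) ((ψ 0 + ψ (2 / 5)) / 2) (ψ (2 / 5)) := by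
  simp only [rep, reportProb_thetaStar]
  rfl

lemma psi_five_halves_zero : psi (5 / 2) 0 = 1 / (1 + exp 5) := by
  norm_num [psi]

lemma psi_five_halves_two_fifths : psi (5 / 2) (2 / 5) = 1 / (1 + exp 1) := by
  norm_num [psi]

lemma one_div_one_add_exp_one_mem : 0.2689 < 1 / (1 + exp 1) ∧ 1 / (1 + exp 1) < 0.2691 := by
  have hl := exp_one_gt_d9
  have hu := exp_one_lt_d9
  constructor
  · rw [lt_div_iff₀ (by positivity)]; linarith
  · rw [div_lt_iff₀ (by positivity)]; linarith

lemma one_div_one_add_exp_five_lt : 1 / (1 + exp 5) < 0.007 := by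
  have h : 2.7 ^ 5 < exp 5 := by
    rw [show (5 : ℝ) = (5 : ℕ) * 1 by norm_num, exp_nat_mul]
    gcongr
    linarith [exp_one_gt_d9]
  rw [div_lt_iff₀ (by positivity)]
  linarith

lemma half_lt_U_fmaj_repOf {q₀ q₁ : ℝ} (h₀ : 0.134 < q₀ ∧ q₀ < 0.139)
    (h₁ : 0.2689 < q₁ ∧ q₁ < 0.2691) {n : ℕ} (hn : 2 < n) :
    1 / 2 < U n (fmaj n) (repOf n (1 / 4) q₀ q₁) := by
  obtain ⟨h₀l, h₀u⟩ := h₀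
  obtain ⟨h₁l, h₁u⟩ := h₁
  have hvar : q₀ * (1 - q₀) ≤ q₁ * (1 - q₁) := by nlinarith
  have hcube : 3 * (q₀ ^ 2 * (1 - q₀)) < q₁ ^ 2 * (1 - q₁) := by nlinarith
  have := mul_binomExpect_fmaj_lt (by linarith) (by linarith) (by linarith) hvar hcube hn
  rw [U_repOf]
  linarith

lemma U_rep_thetaStar_psiInf (n : ℕ) (f : ℕ → ℝ) :
    U n f (rep n thetaStar psiInf) = 1 / 2 - f 0 := by
  have h₀ : psiInf 0 = 0 := by norm_num [psiInf]
  have h₂₅ : psiInf (2 / 5) = 0 := by norm_num [psiInf]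
  rw [rep_thetaStar, h₀, h₂₅, add_zero, zero_div, U_repOf, binomExpect_zero_right]
  ring

lemma sSup_U_rep_thetaStar_psiInf (n : ℕ) :
    sSup {t : ℝ | ∃ f : ℕ → ℝ, IsAggregator f ∧ t = U n f (rep n thetaStar psiInf)} = 1 / 2 := by
  refine IsGreatest.csSup_eq ⟨⟨fun _ => 0, fun _ => by norm_num, ?_⟩, ?_⟩
  · rw [U_rep_thetaStar_psiInf, sub_zero]
  · rintro t ⟨f, hf, rfl⟩
    rw [U_rep_thetaStar_psiInf]
    linarith [(hf 0).1]

/-- **Majority voting on bounded-rational reports beats the best aggregation of fully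
rational reports.** With `θ*` as above and `λ* = 5/2`, each expert's bounded-rational
report is `1` with probability `q_0 = 1/(2+2e^5) + 1/(2+2e)` when `ω = 0` and
`q_1 = 1/(1+e)` when `ω = 1`; and for every `n > 2` the best aggregation of the fully
rational reports attains utility exactly `1/2`, which majority voting on the
bounded-rational reports strictly beats. -/
theorem majority_beats_perfect_rationality :
    reportProb thetaStar (psi (5 / 2)) false =
        1 / (2 + 2 * Real.exp 5) + 1 / (2 + 2 * Real.exp 1) ∧
    reportProb thetaStar (psi (5 / 2)) true = 1 / (1 + Real.exp 1) ∧
    ∀ n : ℕ, 2 < n →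
      sSup {t : ℝ | ∃ f : ℕ → ℝ, IsAggregator f ∧ t = U n f (rep n thetaStar psiInf)} = 1 / 2 ∧
        U n (fmaj n) (rep n thetaStar (psi (5 / 2))) >
          sSup {t : ℝ | ∃ f : ℕ → ℝ, IsAggregator f ∧ t = U n f (rep n thetaStar psiInf)} := by
  refine ⟨?_, ?_, fun n hn => ⟨sSup_U_rep_thetaStar_psiInf n, ?_⟩⟩
  · rw [reportProb_thetaStar, if_neg Bool.false_ne_true, psi_five_halves_zero,
      psi_five_halves_two_fifths]
    field_simp
  · rw [reportProb_thetaStar, if_pos rfl, psi_five_halves_two_fifths]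
  · obtain ⟨h₁l, h₁u⟩ := one_div_one_add_exp_one_mem
    have h₅l : 0 < 1 / (1 + exp 5) := by positivity
    have h₅u := one_div_one_add_exp_five_lt
    rw [sSup_U_rep_thetaStar_psiInf, rep_thetaStar, psi_five_halves_zero,
      psi_five_halves_two_fifths]
    exact half_lt_U_fmaj_repOf ⟨by linarith, by linarith⟩ ⟨h₁l, h₁u⟩ hn
end

section
/- Pairwise optimality implies minimax optimality: fix n ≥ 1 and λ > 0. For μ, q_0, q_1 ∈ [0,1], let θ̂(μ, q_0, q_1) denote the report structure in which Pr[ω=1] = μ and, conditional on ω, the n reports X_i ∈ {0,1} are i.i.d. with Pr[X_i=1 | ω=1] = q_1 and Pr[X_i=1 | ω=0] = q_0; the symmetric partner of θ̂(μ, q_0, q_1) is θ̂(1−μ, 1−q_1, 1−q_0). Suppose that for every report structure θ̂ ∈ Θ̂^ciid_λ, with symmetric partner θ̂′, majority voting maximizes f ↦ U(f, θ̂) + U(f, θ̂′) over all aggregators f. Then majority voting minimizes the worst-case regret: sup_{θ̂ ∈ Θ̂^ciid_λ} R(f^maj, θ̂) = min over aggregators f of sup_{θ̂ ∈ Θ̂^ciid_λ}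 R(f, θ̂). -/
open Real Finset

/-!
Relabelling the state and every report (`relabel`) sends `θ̂(μ, q₀, q₁)` to its symmetric partner,
reflects the count `x ↦ n - x`, keeps the omniscient utility and, since
`f^maj(n - x) = 1 - f^maj(x)`, keeps the regret of majority voting. Because `Θ̂^ciid_λ` is closed
under partners (ψ_λ(1 - p) = 1 - ψ_λ(p)), for every `θ̂` in it and every aggregator `f`, pairwise
optimality gives `2 R(f^maj, θ̂) ≤ R(f, θ̂) + R(f, θ̂′) ≤ 2 sup R(f, ·)`; the suprema are finite as
utilities lie in `[-1, 1]`.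
-/

def relabel {n : ℕ} (r : Bool → (Fin n → Bool) → ℝ) : Bool → (Fin n → Bool) → ℝ :=
  fun w v => r (!w) (fun i => !v i)

lemma repOf_partner_eq_relabel (n : ℕ) (μ q0 q1 : ℝ) :
    repOf n (1 - μ) (1 - q1) (1 - q0) = relabel (repOf n μ q0 q1) := by
  funext w v
  unfold relabel repOf
  congr 1
  · cases w <;> simp
  · refine prod_congr rfl fun i _ => ?_
    cases w <;> cases hv : v i <;> simp [hv]

lemma card_filter_not {n : ℕ} (v : Fin n → Bool) :
    #{i | (!v i) = true} = n - #{i | v i = true} := by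
  have h := card_filter_add_card_filter_not (s := univ) (fun i => v i = true)
  simp only [card_univ, Fintype.card_fin, Bool.not_eq_true] at h
  simp only [Bool.not_eq_true']
  omega

lemma jointProb_relabel {n x : ℕ} (r : Bool → (Fin n → Bool) → ℝ) (w : Bool) (hx : x ≤ n) :
    jointProb n (relabel r) w x = jointProb n r (!w) (n - x) := by
  have hinv : Function.Involutive fun (v : Fin n → Bool) i => !v i :=
    fun v => funext fun i => Bool.not_not (v i)
  refine Fintype.sum_equiv (hinv.toPerm _) _ _ fun v => ?_
  have hcard : #{i | v i = true} = x ↔ #{i | (!v i) = true} = n - x := by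
    have := card_le_univ {i | v i = true}
    rw [card_filter_not, Fintype.card_fin] at *
    omega
  simp only [relabel, Function.Involutive.coe_toPerm]
  exact if_congr hcard rfl rfl

lemma U_relabel (n : ℕ) (f : ℕ → ℝ) (r : Bool → (Fin n → Bool) → ℝ) :
    U n f (relabel r) = U n (fun x => 1 - f (n - x)) r := by
  unfold U
  rw [← sum_range_reflect]
  refine sum_congr rfl fun x hx => ?_
  have hx : x ≤ n := Nat.lt_succ_iff.1 (mem_range.1 hx)
  rw [Nat.add_sub_cancel, jointProb_relabel r _ (Nat.sub_le n x),
    jointProb_relabel r _ (Nat.sub_le n x), Nat.sub_sub_self hx]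
  simp only [Bool.not_true, Bool.not_false]
  ring

lemma U_optAgg (n : ℕ) (r : Bool → (Fin n → Bool) → ℝ) :
    U n (optAgg n r) r = ∑ x ∈ range (n + 1), |jointProb n r true x - jointProb n r false x| := by
  refine sum_congr rfl fun x _ => ?_
  unfold optAgg
  split_ifs with hlt heq
  · rw [abs_of_pos (sub_pos.2 hlt)]; ring
  · rw [heq]; simp
  · rw [abs_of_neg (sub_neg.2 (lt_of_le_of_ne (not_lt.1 hlt) heq))]; ring

lemma U_optAgg_relabel (n : ℕ) (r : Bool → (Fin n → Bool) → ℝ) :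
    U n (optAgg n (relabel r)) (relabel r) = U n (optAgg n r) r := by
  rw [U_optAgg, U_optAgg, ← sum_range_reflect]
  refine sum_congr rfl fun x hx => ?_
  have hx : x ≤ n := Nat.lt_succ_iff.1 (mem_range.1 hx)
  rw [Nat.add_sub_cancel, jointProb_relabel r _ (Nat.sub_le n x),
    jointProb_relabel r _ (Nat.sub_le n x), Nat.sub_sub_self hx, abs_sub_comm]
  rfl

lemma U_congr {n : ℕ} {f g : ℕ → ℝ} (r : Bool → (Fin n → Bool) → ℝ) (h : ∀ x ≤ n, f x = g x) :
    U n f r = U n g r :=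
  sum_congr rfl fun x hx => by rw [h x (Nat.lt_succ_iff.1 (mem_range.1 hx))]

lemma one_sub_fmaj_sub {n x : ℕ} (hx : x ≤ n) : 1 - fmaj n (n - x) = fmaj n x := by
  unfold fmaj
  split_ifs <;> first | omega | norm_num

lemma regret_fmaj_relabel (n : ℕ) (r : Bool → (Fin n → Bool) → ℝ) :
    regret n (fmaj n) (relabel r) = regret n (fmaj n) r := by
  rw [regret, regret, U_optAgg_relabel, U_relabel, U_congr r fun x => one_sub_fmaj_sub]

lemma psi_nonneg (lam p : ℝ) : 0 ≤ psi lam p := by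
  unfold psi; positivity

lemma psi_le_one (lam p : ℝ) : psi lam p ≤ 1 := by
  unfold psi
  rw [div_le_one (by positivity)]
  linarith [Real.exp_pos (2 * lam * (1 - 2 * p))]

lemma psi_one_sub (lam p : ℝ) : psi lam (1 - p) = 1 - psi lam p := by
  have hexp : Real.exp (2 * lam * (1 - 2 * (1 - p))) = (Real.exp (2 * lam * (1 - 2 * p)))⁻¹ := by
    rw [← Real.exp_neg]; ring_nf
  have hpos := Real.exp_pos (2 * lam * (1 - 2 * p))
  unfold psi
  rw [hexp]
  field_simp
  ring

namespace SignalStructure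

def partner (θ : SignalStructure) : SignalStructure where
  k := θ.k
  prior := 1 - θ.prior
  nu0 := θ.nu1
  nu1 := θ.nu0
  prior_nonneg := by linarith [θ.prior_le_one]
  prior_le_one := by linarith [θ.prior_nonneg]
  nu0_nonneg := θ.nu1_nonneg
  nu1_nonneg := θ.nu0_nonneg
  nu0_sum := θ.nu1_sum
  nu1_sum := θ.nu0_sum

instance : Inhabited SignalStructure :=
  ⟨{ k := 1, prior := 0, nu0 := 1, nu1 := 1, prior_nonneg := le_rfl, prior_le_one := zero_le_one,
     nu0_nonneg := fun _ => zero_le_one, nu1_nonneg := fun _ => zero_le_one,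
     nu0_sum := by simp, nu1_sum := by simp }⟩

variable (θ : SignalStructure)

lemma nu_nonneg (w : Bool) (s : Fin θ.k) : 0 ≤ if w then θ.nu1 s else θ.nu0 s := by
  cases w
  exacts [θ.nu0_nonneg s, θ.nu1_nonneg s]

lemma sum_nu (w : Bool) : ∑ s, (if w then θ.nu1 s else θ.nu0 s) = 1 := by
  cases w
  exacts [θ.nu0_sum, θ.nu1_sum]

lemma posterior_partner (s : Fin θ.k)
    (h : 0 < θ.prior * θ.nu1 s + (1 - θ.prior) * θ.nu0 s) :
    posterior θ.partner s = 1 - posterior θ s := by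
  have hden : θ.partner.prior * θ.partner.nu1 s + (1 - θ.partner.prior) * θ.partner.nu0 s
      = θ.prior * θ.nu1 s + (1 - θ.prior) * θ.nu0 s := by
    simp only [partner]; ring
  unfold posterior
  rw [hden, if_neg h.ne', if_neg h.ne']
  field_simp
  simp only [partner]
  ring

end SignalStructure

open SignalStructure

lemma reportProb_mem_Icc {ψ : ℝ → ℝ} (hψ : ∀ p, ψ p ∈ Set.Icc 0 1) (θ : SignalStructure)
    (w : Bool) : reportProb θ ψ w ∈ Set.Icc 0 1 := by
  refine ⟨sum_nonneg fun s _ => mul_nonneg (θ.nu_nonneg w s) (hψ _).1, ?_⟩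
  calc reportProb θ ψ w ≤ ∑ s, (if w then θ.nu1 s else θ.nu0 s) :=
        sum_le_sum fun s _ => mul_le_of_le_one_right (θ.nu_nonneg w s) (hψ _).2
    _ = 1 := θ.sum_nu w

-- `posterior` is `0` on null signals, so `posterior θ.partner = 1 - posterior θ` fails where a
-- state has prior `0`.
lemma reportProb_partner {ψ : ℝ → ℝ} (hψ : ∀ p, ψ (1 - p) = 1 - ψ p) (θ : SignalStructure)
    (w : Bool) (hw : 0 < if w then 1 - θ.prior else θ.prior) :
    reportProb θ.partner ψ w = 1 - reportProb θ ψ (!w) := by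
  have hterm : ∀ s, (if w then θ.partner.nu1 s else θ.partner.nu0 s) * ψ (posterior θ.partner s)
      = (if !w then θ.nu1 s else θ.nu0 s) * (1 - ψ (posterior θ s)) := by
    intro s
    rcases (θ.nu_nonneg (!w) s).eq_or_lt with h0 | h0
    · cases w <;> simp_all [partner]
    · have hden : 0 < θ.prior * θ.nu1 s + (1 - θ.prior) * θ.nu0 s := by
        have := θ.prior_nonneg; have := θ.prior_le_one
        have := θ.nu0_nonneg s; have := θ.nu1_nonneg s
        cases w <;> simp only [Bool.not_false, Bool.not_true, if_true, if_false,
          Bool.false_eq_true] at hw h0 <;> positivity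
      rw [θ.posterior_partner s hden, hψ]
      cases w <;> rfl
  calc reportProb θ.partner ψ w
      = ∑ s : Fin θ.k, (if !w then θ.nu1 s else θ.nu0 s) * (1 - ψ (posterior θ s)) :=
        sum_congr rfl fun s _ => hterm s
    _ = 1 - reportProb θ ψ (!w) := by
        simp only [mul_one_sub, sum_sub_distrib, θ.sum_nu, reportProb]

lemma rep_partner {ψ : ℝ → ℝ} (hψ : ∀ p, ψ (1 - p) = 1 - ψ p) (n : ℕ) (θ : SignalStructure) :
    rep n θ.partner ψ = relabel (rep n θ ψ) := by
  rw [rep, rep, ← repOf_partner_eq_relabel]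
  funext w v
  by_cases hw : (if w then 1 - θ.prior else θ.prior) = 0
  · cases w <;> simp_all [repOf, partner]
  · have hq := reportProb_partner hψ θ w (lt_of_le_of_ne (by
      cases w <;> simp [θ.prior_nonneg, θ.prior_le_one]) (Ne.symm hw))
    cases w <;> simp_all [repOf, partner]

lemma fmaj_isAggregator (n : ℕ) : IsAggregator (fmaj n) := fun x => by
  unfold fmaj
  split_ifs <;> norm_num

lemma optAgg_isAggregator (n : ℕ) (r : Bool → (Fin n → Bool) → ℝ) : IsAggregator (optAgg n r) :=
  fun x => by
    unfold optAgg
    split_ifs <;> norm_num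

section Bounds

variable {n : ℕ} {μ q0 q1 : ℝ}

lemma repOf_nonneg (hμ : μ ∈ Set.Icc (0 : ℝ) 1) (hq0 : q0 ∈ Set.Icc (0 : ℝ) 1)
    (hq1 : q1 ∈ Set.Icc (0 : ℝ) 1) (w : Bool) (v : Fin n → Bool) : 0 ≤ repOf n μ q0 q1 w v := by
  obtain ⟨_, _⟩ := hμ; obtain ⟨_, _⟩ := hq0; obtain ⟨_, _⟩ := hq1
  refine mul_nonneg ?_ (prod_nonneg fun i _ => ?_) <;> split_ifs <;> linarith

lemma sum_repOf (w : Bool) : ∑ v, repOf n μ q0 q1 w v = if w then μ else 1 - μ := by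
  have hprod : ∀ q : ℝ, ∑ v : Fin n → Bool, ∏ i, (if v i then q else 1 - q) = 1 := fun q => by
    rw [← Fintype.prod_sum fun _ (b : Bool) => if b then q else 1 - q]
    simp
  simp only [repOf, ← mul_sum, hprod, mul_one]

lemma sum_jointProb (r : Bool → (Fin n → Bool) → ℝ) (w : Bool) :
    ∑ x ∈ range (n + 1), jointProb n r w x = ∑ v, r w v := by
  simp only [jointProb]
  rw [sum_comm]
  refine sum_congr rfl fun v _ => ?_
  rw [sum_ite_eq, if_pos (mem_range.2 (Nat.lt_succ_of_le (card_le_univ _ |>.trans_eq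
    (Fintype.card_fin n))))]

lemma abs_U_repOf_le_one {f : ℕ → ℝ} (hf : IsAggregator f) (hμ : μ ∈ Set.Icc (0 : ℝ) 1)
    (hq0 : q0 ∈ Set.Icc (0 : ℝ) 1) (hq1 : q1 ∈ Set.Icc (0 : ℝ) 1) :
    |U n f (repOf n μ q0 q1)| ≤ 1 := by
  set r := repOf n μ q0 q1
  have hJ : ∀ w x, 0 ≤ jointProb n r w x := fun w x =>
    sum_nonneg fun v _ => by split_ifs; exacts [repOf_nonneg hμ hq0 hq1 w v, le_rfl]
  calc |U n f r|
      ≤ ∑ x ∈ range (n + 1), |(2 * f x - 1) * (jointProb n r true x - jointProb n r false x)| :=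
        abs_sum_le_sum_abs _ _
    _ ≤ ∑ x ∈ range (n + 1), (jointProb n r true x + jointProb n r false x) := by
        refine sum_le_sum fun x _ => ?_
        have hf1 : |2 * f x - 1| ≤ 1 := abs_le.2 ⟨by linarith [(hf x).1], by linarith [(hf x).2]⟩
        rw [abs_mul]
        refine (mul_le_of_le_one_left (abs_nonneg _) hf1).trans ?_
        calc _ ≤ |jointProb n r true x| + |jointProb n r false x| := abs_sub _ _
          _ = _ := by rw [abs_of_nonneg (hJ true x), abs_of_nonneg (hJ false x)]
    _ = 1 := by
        rw [sum_add_distrib, sum_jointProb, sum_jointProb, sum_repOf, sum_repOf]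
        simp

end Bounds

section RepSet

variable {n : ℕ} {lam : ℝ} {r : Bool → (Fin n → Bool) → ℝ} {f : ℕ → ℝ}

lemma repSet_nonempty (n : ℕ) (lam : ℝ) : (repSet n lam).Nonempty :=
  ⟨_, default, rfl⟩

lemma exists_eq_repOf_of_mem_repSet (hr : r ∈ repSet n lam) :
    ∃ μ ∈ Set.Icc (0 : ℝ) 1, ∃ q0 ∈ Set.Icc (0 : ℝ) 1, ∃ q1 ∈ Set.Icc (0 : ℝ) 1,
      r = repOf n μ q0 q1 := by
  obtain ⟨θ, rfl⟩ := hr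
  have hq := reportProb_mem_Icc (fun p => ⟨psi_nonneg lam p, psi_le_one lam p⟩) θ
  exact ⟨_, ⟨θ.prior_nonneg, θ.prior_le_one⟩, _, hq false, _, hq true, rfl⟩

lemma relabel_mem_repSet (hr : r ∈ repSet n lam) : relabel r ∈ repSet n lam := by
  obtain ⟨θ, rfl⟩ := hr
  exact ⟨θ.partner, rep_partner (psi_one_sub lam) n θ⟩

lemma regret_le_two (hf : IsAggregator f) (hr : r ∈ repSet n lam) : regret n f r ≤ 2 := by
  obtain ⟨μ, hμ, q0, hq0, q1, hq1, rfl⟩ := exists_eq_repOf_of_mem_repSet hr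
  have hopt := abs_U_repOf_le_one (n := n) (optAgg_isAggregator n (repOf n μ q0 q1)) hμ hq0 hq1
  have hU := abs_U_repOf_le_one (n := n) hf hμ hq0 hq1
  rw [abs_le] at hopt hU
  unfold regret
  linarith

lemma regret_le_worstRegret (hf : IsAggregator f) (hr : r ∈ repSet n lam) :
    regret n f r ≤ worstRegret n lam f :=
  le_csSup ⟨2, by rintro _ ⟨r', hr', rfl⟩; exact regret_le_two hf hr'⟩ ⟨r, hr, rfl⟩

end RepSet

lemma two_mul_regret_fmaj_le {n : ℕ} {f : ℕ → ℝ} (r : Bool → (Fin n → Bool) → ℝ)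
    (h : U n f r + U n f (relabel r) ≤ U n (fmaj n) r + U n (fmaj n) (relabel r)) :
    2 * regret n (fmaj n) r ≤ regret n f r + regret n f (relabel r) := by
  have hmaj := regret_fmaj_relabel n r
  unfold regret at hmaj ⊢
  rw [U_optAgg_relabel] at hmaj ⊢
  linarith

theorem pairwise_optimality_implies_minimax_general (n : ℕ) (lam : ℝ)
    (hpair : ∀ μ q0 q1 : ℝ, μ ∈ Set.Icc (0 : ℝ) 1 → q0 ∈ Set.Icc (0 : ℝ) 1 →
      q1 ∈ Set.Icc (0 : ℝ) 1 → repOf n μ q0 q1 ∈ repSet n lam →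
      ∀ f : ℕ → ℝ, IsAggregator f →
        U n f (repOf n μ q0 q1) + U n f (repOf n (1 - μ) (1 - q1) (1 - q0)) ≤
          U n (fmaj n) (repOf n μ q0 q1) +
            U n (fmaj n) (repOf n (1 - μ) (1 - q1) (1 - q0))) :
    worstRegret n lam (fmaj n) =
      sInf {t : ℝ | ∃ f : ℕ → ℝ, IsAggregator f ∧ t = worstRegret n lam f} := by
  have hmin : ∀ f, IsAggregator f → worstRegret n lam (fmaj n) ≤ worstRegret n lam f := by
    intro f hf
    obtain ⟨r₀, hr₀⟩ := repSet_nonempty n lam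
    refine csSup_le ⟨_, r₀, hr₀, rfl⟩ ?_
    rintro _ ⟨r, hr, rfl⟩
    obtain ⟨μ, hμ, q0, hq0, q1, hq1, rfl⟩ := exists_eq_repOf_of_mem_repSet hr
    have hU := hpair μ q0 q1 hμ hq0 hq1 hr f hf
    rw [repOf_partner_eq_relabel] at hU
    have h₁ := regret_le_worstRegret hf hr
    have h₂ := regret_le_worstRegret hf (relabel_mem_repSet hr)
    linarith [two_mul_regret_fmaj_le _ hU]
  have hleast : IsLeast {t : ℝ | ∃ f : ℕ → ℝ, IsAggregator f ∧ t = worstRegret n lam f}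
      (worstRegret n lam (fmaj n)) :=
    ⟨⟨fmaj n, fmaj_isAggregator n, rfl⟩, by rintro _ ⟨f, hf, rfl⟩; exact hmin f hf⟩
  exact hleast.csInf_eq.symm

/-- **Pairwise optimality implies minimax optimality.** Fix `n ≥ 1` and `λ > 0`. Suppose
that for every report structure `θ̂ = θ̂(μ, q₀, q₁) ∈ Θ̂^ciid_λ`, with symmetric partner
`θ̂′ = θ̂(1−μ, 1−q₁, 1−q₀)`, majority voting maximizes `f ↦ U(f, θ̂) + U(f, θ̂′)` over all
aggregators `f`. Then majority voting minimizes the worst-case regret: its worst-case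
regret over `Θ̂^ciid_λ` equals the minimax regret over all aggregators. -/
theorem pairwise_optimality_implies_minimax (n : ℕ) (hn : 1 ≤ n) (lam : ℝ) (hlam : 0 < lam)
    (hpair : ∀ μ q0 q1 : ℝ, μ ∈ Set.Icc (0 : ℝ) 1 → q0 ∈ Set.Icc (0 : ℝ) 1 →
      q1 ∈ Set.Icc (0 : ℝ) 1 → repOf n μ q0 q1 ∈ repSet n lam →
      ∀ f : ℕ → ℝ, IsAggregator f →
        U n f (repOf n μ q0 q1) + U n f (repOf n (1 - μ) (1 - q1) (1 - q0)) ≤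
          U n (fmaj n) (repOf n μ q0 q1) +
            U n (fmaj n) (repOf n (1 - μ) (1 - q1) (1 - q0))) :
    worstRegret n lam (fmaj n) =
      sInf {t : ℝ | ∃ f : ℕ → ℝ, IsAggregator f ∧ t = worstRegret n lam f} :=
  pairwise_optimality_implies_minimax_general n lam hpair
end
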